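/- Let $R \ge 1$ be a real number and let $\psi : J \to \mathbb{R}_{\ge 0}$ assign to each element $b$ of a finite index set $J$ a nonnegative range, and let $x : J \to \mathbb{R}$ assign starting abscissas. For $i \in \mathbb{Z}$ say that shift $i$ is 'violated' if there exists $b \in J$ with $x(b) \notin [-i, -i+R]$ but $[x(b) - \psi(b), x(b) + \psi(b)] \cap [-i + \lceil R^{7/8} \rceil, -i + R - \lceil R^{7/8} \rceil] \ne \emptyset$. Then the number of violated shifts $i \in \mathbb{Z}$ is at most $2 \sum_{b \in J} (\psi(b) - R^{7/8} + 2)_+$. -/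

import Mathlib

/-!
A shift `i` is violated by a bridge `b` only if `x b` lies to the left of `[-i, -i + R]` and
`x b + ψ b` reaches `-i + ⌈R^{7/8}⌉`, or symmetrically on the right. Each of the two cases confines
`i` to a real interval of length `ψ b - ⌈R^{7/8}⌉`, which contains at most
`(ψ b - R^{7/8} + 1)_+` integers; a union bound over the bridges finishes the count.
-/

open Finset

/-- `c` is the erosion depth, `⌈R^{7/8}⌉` in the application. -/
def IsViolatedBy (R c x ψ : ℝ) (i : ℤ) : Prop :=
  x ∉ Set.Icc (-(i : ℝ)) (-(i : ℝ) + R) ∧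
    (Set.Icc (x - ψ) (x + ψ) ∩ Set.Icc (-(i : ℝ) + c) (-(i : ℝ) + R - c)).Nonempty

theorem Int.card_le_of_forall_mem_Icc (S : Finset ℤ) (u v : ℝ)
    (hS : ∀ i ∈ S, (i : ℝ) ∈ Set.Icc u v) : (#S : ℝ) ≤ max (v - u + 1) 0 := by
  have hsub : S ⊆ Icc ⌈u⌉ ⌊v⌋ := fun i hi =>
    mem_Icc.2 ⟨Int.ceil_le.2 (hS i hi).1, Int.le_floor.2 (hS i hi).2⟩
  have hcard : (#(Icc ⌈u⌉ ⌊v⌋) : ℝ) = max ((⌊v⌋ : ℝ) + 1 - ⌈u⌉) 0 := by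
    rw [Int.card_Icc, ← Int.cast_natCast, Int.toNat_eq_max]
    push_cast
    rfl
  calc (#S : ℝ) ≤ #(Icc ⌈u⌉ ⌊v⌋) := by exact_mod_cast card_le_card hsub
    _ ≤ max (v - u + 1) 0 := by
      rw [hcard]
      gcongr
      linarith [Int.floor_le v, Int.le_ceil u]

theorem card_le_of_forall_isViolatedBy (R c x ψ : ℝ) (S : Finset ℤ)
    (hS : ∀ i ∈ S, IsViolatedBy R c x ψ i) : (#S : ℝ) ≤ 2 * max (ψ - c + 1) 0 := by
  classical
  have hleft : (#(S.filter fun i : ℤ => x < -(i : ℝ)) : ℝ) ≤ max (ψ - c + 1) 0 := by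
    convert Int.card_le_of_forall_mem_Icc _ (c - x - ψ) (-x) ?_ using 2
    · ring
    intro i hi
    obtain ⟨hiS, hlt⟩ := mem_filter.1 hi
    obtain ⟨-, y, hy, hy'⟩ := hS i hiS
    constructor <;> linarith [hy.2, hy'.1]
  have hright : (#(S.filter fun i : ℤ => ¬ x < -(i : ℝ)) : ℝ) ≤ max (ψ - c + 1) 0 := by
    convert Int.card_le_of_forall_mem_Icc _ (R - x) (R - c - x + ψ) ?_ using 2
    · ring
    intro i hi
    obtain ⟨hiS, hge⟩ := mem_filter.1 hi
    obtain ⟨hout, y, hy, hy'⟩ := hS i hiS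
    have hgt : -(i : ℝ) + R < x := by
      by_contra h
      exact hout ⟨not_lt.1 hge, not_lt.1 h⟩
    constructor <;> linarith [hy.1, hy'.2]
  have hsplit := card_filter_add_card_filter_not (s := S) fun i : ℤ => x < -(i : ℝ)
  calc (#S : ℝ)
      = #(S.filter fun i : ℤ => x < -(i : ℝ)) + #(S.filter fun i : ℤ => ¬ x < -(i : ℝ)) := by
        exact_mod_cast hsplit.symm
    _ ≤ 2 * max (ψ - c + 1) 0 := by linarith

theorem stmt0_general {J : Type*} (Jf : Finset J) (ψ x : J → ℝ)
    (R : ℝ)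
    (violated : ℤ → Prop)
    (hviol : ∀ i : ℤ, violated i ↔ ∃ b ∈ Jf,
      x b ∉ Set.Icc (-(i : ℝ)) (-(i : ℝ) + R) ∧
      (Set.Icc (x b - ψ b) (x b + ψ b) ∩
        Set.Icc (-(i : ℝ) + (⌈R ^ ((7:ℝ)/8)⌉ : ℝ))
          (-(i : ℝ) + R - (⌈R ^ ((7:ℝ)/8)⌉ : ℝ))).Nonempty)
    (T : Finset ℤ) (hT : ∀ i ∈ T, violated i) :
    (T.card : ℝ) ≤ 2 * ∑ b ∈ Jf, max (ψ b - R ^ ((7:ℝ)/8) + 2) 0 := by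
  classical
  set ρ : ℝ := R ^ ((7:ℝ)/8)
  let V : J → Finset ℤ := fun b => T.filter (IsViolatedBy R ⌈ρ⌉ (x b) (ψ b))
  have hcover : T ⊆ Jf.biUnion V := fun i hi => by
    obtain ⟨b, hb, hviol_b⟩ := (hviol i).1 (hT i hi)
    exact mem_biUnion.2 ⟨b, hb, mem_filter.2 ⟨hi, hviol_b⟩⟩
  have hV : ∀ b ∈ Jf, (#(V b) : ℝ) ≤ 2 * max (ψ b - ρ + 2) 0 := fun b _ => by
    refine (card_le_of_forall_isViolatedBy R ⌈ρ⌉ (x b) (ψ b) _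
      fun i hi => (mem_filter.1 hi).2).trans ?_
    gcongr 2 * max ?_ 0
    linarith [Int.le_ceil ρ]
  calc (#T : ℝ) ≤ ∑ b ∈ Jf, (#(V b) : ℝ) := by
        exact_mod_cast (card_le_card hcover).trans card_biUnion_le
    _ ≤ ∑ b ∈ Jf, 2 * max (ψ b - ρ + 2) 0 := sum_le_sum hV
    _ = 2 * ∑ b ∈ Jf, max (ψ b - ρ + 2) 0 := (mul_sum _ _ _).symm

theorem stmt0 {J : Type*} (Jf : Finset J) (ψ x : J → ℝ) (hψ : ∀ b, 0 ≤ ψ b)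
    (R : ℝ) (hR : 1 ≤ R)
    (violated : ℤ → Prop)
    (hviol : ∀ i : ℤ, violated i ↔ ∃ b ∈ Jf,
      x b ∉ Set.Icc (-(i : ℝ)) (-(i : ℝ) + R) ∧
      (Set.Icc (x b - ψ b) (x b + ψ b) ∩
        Set.Icc (-(i : ℝ) + (⌈R ^ ((7:ℝ)/8)⌉ : ℝ))
          (-(i : ℝ) + R - (⌈R ^ ((7:ℝ)/8)⌉ : ℝ))).Nonempty)
    (T : Finset ℤ) (hT : ∀ i ∈ T, violated i) :
    (T.card : ℝ) ≤ 2 * ∑ b ∈ Jf, max (ψ b - R ^ ((7:ℝ)/8) + 2) 0 :=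
  stmt0_general Jf ψ x R violated hviol T hT
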